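/- Define A(z) := (1 − 4z²)^{−1/2} and B(z) := −2·A(z)·arcsin(2z) as real-analytic functions on (−1/2, 1/2). Then the Taylor coefficients of A at 0 are integers, and the n-th Taylor coefficient of B at 0, multiplied by lcm(1, 2, ..., n), is an integer for every n ≥ 1. -/

import Mathlib

/-!
Both functions satisfy `(1 - 4x²) f' = c + 4x f` near `0` (with `c = 0` for `A` and `c = -4`
for `B`, using `A · √(1 - 4x²) = 1`). Differentiating `n + 1` times at `0` gives
`f⁽ⁿ⁺²⁾(0) = 4 (n + 1)² f⁽ⁿ⁾(0)`. So the odd coefficients of `A` and the even ones of `B`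
vanish, the coefficient of `z²ᵏ` in `A` is `C(2k, k)`, and that of `z²ᵏ⁺¹` in `B` is
`-4 · 16ᵏ k!² / (2k + 1)! = -4 · 16ᵏ / ((k + 1) C(2k + 1, k + 1))`. Finally
`m C(n, m)` divides `lcm(1, …, n)`: by Kummer's theorem the carries in `m + (n - m)` base `p`
occur only in positions `i` with `v_p(m) < i ≤ log_p n`.
-/

/-- `A(z) = (1 − 4z²)^{−1/2}`. -/
noncomputable def Afun (z : ℝ) : ℝ := (1 - 4 * z ^ 2) ^ (-(1 : ℝ) / 2)

/-- `B(z) = −2 A(z) arcsin(2z)`. -/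
noncomputable def Bfun (z : ℝ) : ℝ := -2 * Afun z * Real.arcsin (2 * z)

open Nat Filter Topology Real
open scoped ContDiff

theorem Nat.mul_choose_dvd_lcmUpto {n m : ℕ} (hm : 0 < m) (hmn : m ≤ n) :
    m * n.choose m ∣ lcmUpto n := by
  rw [← factorization_prime_le_iff_dvd (mul_ne_zero hm.ne' (choose_ne_zero hmn))
    (lcmUpto_ne_zero n)]
  intro p hp
  set e := m.factorization p
  have he : e ≤ log p n :=
    le_log_of_pow_le hp.one_lt ((le_of_dvd hm (ordProj_dvd m p)).trans hmn)
  have hcarries : {i ∈ Finset.Ico 1 (log p n + 1) | p ^ i ≤ m % p ^ i + (n - m) % p ^ i} ⊆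
      Finset.Ico (e + 1) (log p n + 1) := by
    intro i hi
    simp only [Finset.mem_filter, Finset.mem_Ico] at hi ⊢
    refine ⟨?_, hi.1.2⟩
    by_contra! hie
    have hdvd : p ^ i ∣ m := (pow_dvd_pow p (by omega)).trans (ordProj_dvd m p)
    have := mod_lt (n - m) (pow_pos hp.pos i)
    rw [mod_eq_zero_of_dvd hdvd] at hi
    omega
  rw [factorization_lcmUpto n hp, factorization_mul hm.ne' (choose_ne_zero hmn),
    Finsupp.add_apply, factorization_choose hp hmn (lt_add_one _)]
  have := Finset.card_le_card hcarries
  simp only [card_Ico] at this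
  omega

section Recurrence

variable {R : Type*} [CommRing R] {u : ℕ → R} (hu : ∀ n, u (n + 2) = 4 * (n + 1) ^ 2 * u n)
include hu

theorem eq_factorial_mul_centralBinom_of_recurrence (k : ℕ) :
    u (2 * k) = (2 * k)! * centralBinom k * u 0 := by
  induction k with
  | zero => simp
  | succ k ih =>
    have key : (2 * k + 2)! * centralBinom (k + 1) =
        4 * (2 * k + 1) ^ 2 * ((2 * k)! * centralBinom k) := by
      rw [factorial_succ, factorial_succ, show 2 * k + 1 + 1 = 2 * (k + 1) by ring]
      linear_combination (2 * (2 * k + 1) * (2 * k)!) * succ_mul_centralBinom_succ k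
    rw [show 2 * (k + 1) = 2 * k + 2 by ring, hu, ih]
    have := congrArg (Nat.cast (R := R)) key
    push_cast at this ⊢
    linear_combination -u 0 * this

theorem eq_sq_factorial_mul_of_recurrence (k : ℕ) :
    u (2 * k + 1) = 16 ^ k * (k ! : R) ^ 2 * u 1 := by
  induction k with
  | zero => simp
  | succ k ih =>
    rw [show 2 * (k + 1) + 1 = 2 * k + 1 + 2 by ring, hu, ih, factorial_succ]
    push_cast
    ring

end Recurrence

section TaylorCoefficients

variable {𝕜 : Type*} [NontriviallyNormedField 𝕜]

theorem iteratedDeriv_pow_mul_at_zero {g : 𝕜 → 𝕜} {n : ℕ} (m : ℕ) (hg : ContDiffAt 𝕜 n g 0) :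
    iteratedDeriv n (fun x ↦ x ^ m * g x) 0 = n.choose m * m ! * iteratedDeriv (n - m) g 0 := by
  rw [iteratedDeriv_fun_mul (by fun_prop) hg, Finset.sum_eq_single m]
  · simp [descFactorial_self]
  · intro i _ him
    rcases lt_or_gt_of_ne him with h | h
    · simp [iteratedDeriv_pow, zero_pow (Nat.sub_ne_zero_of_lt h)]
    · simp [iteratedDeriv_pow, descFactorial_eq_zero_iff_lt.mpr h]
  · intro hm
    simp [choose_eq_zero_of_lt (by simpa using hm)]

variable {f : 𝕜 → 𝕜} {a c : 𝕜} (hf : ContDiffAt 𝕜 ∞ f 0)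

include hf in
theorem iteratedDeriv_add_two_of_ode
    (hode : deriv f =ᶠ[𝓝 0] fun x ↦ c + a * (x * f x + x ^ 2 * deriv f x)) (n : ℕ) :
    iteratedDeriv (n + 2) f 0 = a * (n + 1) ^ 2 * iteratedDeriv n f 0 := by
  have hfn : ContDiffAt 𝕜 (n + 1) f 0 := hf.of_le (by exact_mod_cast le_top)
  have hfn' : ContDiffAt 𝕜 (n + 1) (deriv f) 0 := hf.derivWithin (by exact_mod_cast le_top)
  have hx : iteratedDeriv (n + 1) (fun x ↦ x * f x) 0 = (n + 1) * iteratedDeriv n f 0 := by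
    simpa using iteratedDeriv_pow_mul_at_zero 1 hfn
  have hx2 : iteratedDeriv (n + 1) (fun x ↦ x ^ 2 * deriv f x) 0 =
      (n + 1) * n * iteratedDeriv n f 0 := by
    rw [iteratedDeriv_pow_mul_at_zero 2 hfn']
    rcases n with _ | n
    · simp
    · have h := congrArg (Nat.cast (R := 𝕜)) (add_one_mul_choose_eq (n + 1) 1)
      rw [show n + 1 + 1 - 2 = n by omega, ← iteratedDeriv_succ']
      push_cast [choose_one_right] at h ⊢
      linear_combination (-iteratedDeriv (n + 1) f 0) * h
  rw [iteratedDeriv_succ', hode.iteratedDeriv_eq, iteratedDeriv_const_add (by omega),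
    iteratedDeriv_const_mul _ (by fun_prop), iteratedDeriv_fun_add (by fun_prop) (by fun_prop),
    hx, hx2]
  ring

variable (hode : deriv f =ᶠ[𝓝 0] fun x ↦ c + 4 * (x * f x + x ^ 2 * deriv f x))
include hf hode

theorem iteratedDeriv_two_mul_of_ode (k : ℕ) :
    iteratedDeriv (2 * k) f 0 = (2 * k)! * centralBinom k * f 0 := by
  simpa using eq_factorial_mul_centralBinom_of_recurrence (u := (iteratedDeriv · f 0))
    (iteratedDeriv_add_two_of_ode hf hode) k

theorem iteratedDeriv_two_mul_add_one_of_ode (k : ℕ) :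
    iteratedDeriv (2 * k + 1) f 0 = 16 ^ k * (k ! : 𝕜) ^ 2 * c := by
  rw [eq_sq_factorial_mul_of_recurrence (u := (iteratedDeriv · f 0))
    (iteratedDeriv_add_two_of_ode hf hode), iteratedDeriv_one, hode.eq_of_nhds]
  simp

end TaylorCoefficients

theorem Afun_mul_sqrt {x : ℝ} (hx : 0 < 1 - 4 * x ^ 2) : Afun x * √(1 - 4 * x ^ 2) = 1 := by
  rw [Afun, sqrt_eq_rpow, ← rpow_add hx]
  norm_num

theorem hasDerivAt_Afun {x : ℝ} (hx : 0 < 1 - 4 * x ^ 2) :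
    HasDerivAt Afun (4 * x * Afun x / (1 - 4 * x ^ 2)) x := by
  have h := (((hasDerivAt_pow 2 x).const_mul 4).const_sub 1).rpow_const
    (p := -(1 : ℝ) / 2) (Or.inl hx.ne')
  refine h.congr_deriv ?_
  rw [rpow_sub_one hx.ne', Afun]
  field_simp
  ring

theorem hasDerivAt_Bfun {x : ℝ} (hx : 0 < 1 - 4 * x ^ 2) :
    HasDerivAt Bfun ((4 * x * Bfun x - 4) / (1 - 4 * x ^ 2)) x := by
  have harcsin := (hasDerivAt_arcsin (x := 2 * x) (by nlinarith) (by nlinarith)).comp x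
    ((hasDerivAt_id x).const_mul 2)
  refine (((hasDerivAt_Afun hx).const_mul (-2)).mul harcsin).congr_deriv ?_
  have hsqrt : √(1 - 4 * x ^ 2) ^ 2 = 1 - 4 * x ^ 2 := sq_sqrt hx.le
  have hsqrt_ne : √(1 - 4 * x ^ 2) ≠ 0 := (sqrt_pos.2 hx).ne'
  rw [Bfun, show 1 - (2 * x) ^ 2 = 1 - 4 * x ^ 2 by ring]
  simp only [Function.comp_apply]
  field_simp
  linear_combination (-4 * √(1 - 4 * x ^ 2)) * Afun_mul_sqrt hx + 4 * Afun x * hsqrt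

theorem contDiffAt_Afun {x : ℝ} (hx : 0 < 1 - 4 * x ^ 2) : ContDiffAt ℝ ∞ Afun x :=
  ContDiffAt.rpow_const_of_ne (by fun_prop) hx.ne'

theorem contDiffAt_Bfun {x : ℝ} (hx : 0 < 1 - 4 * x ^ 2) : ContDiffAt ℝ ∞ Bfun x := by
  have := (contDiffAt_arcsin (x := 2 * x) (by nlinarith) (by nlinarith) (n := ∞)).comp x
    (contDiffAt_id.const_smul (2 : ℝ))
  exact (contDiffAt_const.mul (contDiffAt_Afun hx)).mul this

theorem eventually_pos_one_sub_four_mul_sq : ∀ᶠ x in 𝓝 (0 : ℝ), 0 < 1 - 4 * x ^ 2 :=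
  (by fun_prop : Continuous fun x : ℝ ↦ 1 - 4 * x ^ 2).continuousAt.eventually
    (lt_mem_nhds (by norm_num))

theorem Afun_ode : deriv Afun =ᶠ[𝓝 0] fun x ↦ 0 + 4 * (x * Afun x + x ^ 2 * deriv Afun x) := by
  filter_upwards [eventually_pos_one_sub_four_mul_sq] with x hx
  rw [(hasDerivAt_Afun hx).deriv]
  field_simp
  ring

theorem Bfun_ode :
    deriv Bfun =ᶠ[𝓝 0] fun x ↦ -4 + 4 * (x * Bfun x + x ^ 2 * deriv Bfun x) := by
  filter_upwards [eventually_pos_one_sub_four_mul_sq] with x hx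
  rw [(hasDerivAt_Bfun hx).deriv]
  field_simp
  ring

/-- **Denominator types of `A` and `B`:** the Taylor coefficients of
`A(z) = (1−4z²)^{−1/2}` at `0` are integers, and `lcm(1,…,n)` times the `n`-th
Taylor coefficient of `B(z) = −2A(z)arcsin(2z)` at `0` is an integer for `n ≥ 1`. -/
theorem stmt_7 :
    (∀ n : ℕ, ∃ a : ℤ, iteratedDeriv n Afun 0 / n.factorial = (a : ℝ)) ∧
    (∀ n : ℕ, 1 ≤ n → ∃ b : ℤ,
      ((Finset.Icc 1 n).lcm id : ℕ) * (iteratedDeriv n Bfun 0 / n.factorial) = (b : ℝ)) := by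
  have hA := contDiffAt_Afun (x := 0) (by norm_num)
  have hB := contDiffAt_Bfun (x := 0) (by norm_num)
  refine ⟨fun n ↦ ?_, fun n _ ↦ ?_⟩ <;> obtain ⟨k, rfl | rfl⟩ := n.even_or_odd'
  · refine ⟨centralBinom k, ?_⟩
    rw [iteratedDeriv_two_mul_of_ode hA Afun_ode, Afun]
    field_simp
    norm_num
  · exact ⟨0, by simp [iteratedDeriv_two_mul_add_one_of_ode hA Afun_ode]⟩
  · exact ⟨0, by simp [iteratedDeriv_two_mul_of_ode hB Bfun_ode, Bfun]⟩
  · obtain ⟨q, hq⟩ := Nat.mul_choose_dvd_lcmUpto (n := 2 * k + 1) (m := k + 1) (by omega)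
      (by omega)
    have hfact : (2 * k + 1)! = (k + 1) * (2 * k + 1).choose (k + 1) * (k ! * k !) := by
      rw [← choose_mul_factorial_mul_factorial (show k + 1 ≤ 2 * k + 1 by omega),
        show 2 * k + 1 - (k + 1) = k by omega, factorial_succ]
      ring
    have hchoose : ((2 * k + 1).choose (k + 1) : ℝ) ≠ 0 := mod_cast (choose_pos (by omega)).ne'
    refine ⟨-4 * 16 ^ k * q, ?_⟩
    change ((lcmUpto (2 * k + 1) : ℕ) : ℝ) * _ = _
    rw [iteratedDeriv_two_mul_add_one_of_ode hB Bfun_ode, hq, hfact]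
    push_cast
    field_simp
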